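/- For every b > 0, the function f(x) = (2/B(b,b)) · e^{bx}/(1+e^x)^{2b} on (0,∞) integrates to 1, where B(b,b) is the Beta function. -/

import Mathlib

open MeasureTheory Real

noncomputable def Beta (a b : ℝ) : ℝ := Real.Gamma a * Real.Gamma b / Real.Gamma (a + b)

/-!
The logistic substitution `t = σ(x) = eˣ / (1 + eˣ)` maps `ℝ` onto `(0, 1)` with
`σ' = σ (1 - σ)`, and turns `∫_ℝ e^{ax} / (1 + eˣ)^{a+c} dx` into the Beta integral
`∫₀¹ t^{a-1} (1 - t)^{c-1} dt = B(a, c)`. For `a = c = b` the integrand is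
`σ(x)^b (1 - σ(x))^b`, which is even since `σ(-x) = 1 - σ(x)`; so its integral over `(0, ∞)`
is `B(b, b) / 2`.
-/

open Set

lemma Beta_pos {a b : ℝ} (ha : 0 < a) (hb : 0 < b) : 0 < Beta a b := by
  unfold Beta
  have := Gamma_pos_of_pos (add_pos ha hb)
  have := Gamma_pos_of_pos ha
  have := Gamma_pos_of_pos hb
  positivity

lemma ofReal_Beta (a b : ℝ) :
    (Beta a b : ℂ) = Complex.Gamma a * Complex.Gamma b / Complex.Gamma (a + b) := by
  simp [Beta, ← Complex.ofReal_add, Complex.Gamma_ofReal]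

theorem integral_Ioo_rpow_mul_one_sub_rpow {a b : ℝ} (ha : 0 < a) (hb : 0 < b) :
    ∫ t in Ioo (0 : ℝ) 1, t ^ (a - 1) * (1 - t) ^ (b - 1) = Beta a b := by
  have hΓ : Complex.Gamma (a + b) ≠ 0 :=
    Complex.Gamma_ne_zero_of_re_pos (by simpa using add_pos ha hb)
  have hB : Complex.betaIntegral a b = Beta a b := by
    rw [ofReal_Beta, eq_div_iff hΓ,
      Complex.Gamma_mul_Gamma_eq_betaIntegral (by simpa using ha) (by simpa using hb), mul_comm]
  apply Complex.ofReal_injective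
  rw [← hB, Complex.betaIntegral, intervalIntegral.integral_of_le zero_le_one,
    integral_Ioc_eq_integral_Ioo, ← integral_complex_ofReal]
  refine setIntegral_congr_fun measurableSet_Ioo fun t ht => ?_
  push_cast [Complex.ofReal_cpow ht.1.le, Complex.ofReal_cpow (sub_pos.2 ht.2).le]
  ring

lemma sigmoid_eq_exp_div (x : ℝ) : sigmoid x = exp x / (1 + exp x) := by
  rw [sigmoid_def, exp_neg]
  field_simp
  ring

lemma one_sub_sigmoid (x : ℝ) : 1 - sigmoid x = (1 + exp x)⁻¹ := by
  rw [← sigmoid_neg, sigmoid_def, neg_neg]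

lemma sigmoid_rpow_mul_one_sub_sigmoid_rpow (a c x : ℝ) :
    sigmoid x ^ a * (1 - sigmoid x) ^ c = exp (a * x) / (1 + exp x) ^ (a + c) := by
  have h1 : 0 < 1 + exp x := by positivity
  rw [one_sub_sigmoid, sigmoid_eq_exp_div, div_rpow (exp_pos x).le h1.le, inv_rpow h1.le,
    rpow_add h1, mul_comm a x, exp_mul]
  field_simp

theorem integral_exp_mul_div_one_add_exp_rpow {a c : ℝ} (ha : 0 < a) (hc : 0 < c) :
    ∫ x, exp (a * x) / (1 + exp x) ^ (a + c) = Beta a c := by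
  have hsub := integral_image_eq_integral_abs_deriv_smul MeasurableSet.univ
    (fun x _ => (hasDerivAt_sigmoid x).hasDerivWithinAt) sigmoid_injective.injOn
    (fun t => t ^ (a - 1) * (1 - t) ^ (c - 1))
  rw [image_univ, range_sigmoid, integral_Ioo_rpow_mul_one_sub_rpow ha hc,
    Measure.restrict_univ] at hsub
  rw [hsub]
  congr 1 with x
  have hσ := sigmoid_pos x
  have hσ' : 0 < 1 - sigmoid x := sub_pos.2 (sigmoid_lt_one x)
  rw [smul_eq_mul, abs_of_pos (mul_pos hσ hσ'), rpow_sub_one hσ.ne', rpow_sub_one hσ'.ne',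
    ← sigmoid_rpow_mul_one_sub_sigmoid_rpow]
  field_simp

lemma integral_Ioi_zero_eq_half_integral {f : ℝ → ℝ} (hf : Function.Even f) :
    ∫ x in Ioi (0 : ℝ), f x = (∫ x, f x) / 2 := by
  have habs : ∀ x, f |x| = f x := fun x => by
    rcases abs_choice x with h | h <;> rw [h]
    exact hf x
  rw [eq_div_iff two_ne_zero, mul_comm, ← integral_comp_abs]
  simp only [habs]

lemma even_exp_mul_div_one_add_exp_rpow (b : ℝ) :
    Function.Even fun x => exp (b * x) / (1 + exp x) ^ (b + b) := fun x => by
  simp only [← sigmoid_rpow_mul_one_sub_sigmoid_rpow, sigmoid_neg, sub_sub_cancel, mul_comm]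

theorem typeIII_half_logistic_density_integrates_to_one (b : ℝ) (hb : 0 < b) :
    ∫ x in Set.Ioi (0 : ℝ),
      (2 / Beta b b) * (Real.exp (b * x) / (1 + Real.exp x) ^ (2 * b)) = 1 := by
  rw [integral_const_mul, two_mul, integral_Ioi_zero_eq_half_integral
    (even_exp_mul_div_one_add_exp_rpow b), integral_exp_mul_div_one_add_exp_rpow hb hb]
  field_simp [(Beta_pos hb hb).ne']
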